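/- arXiv:1003.0564 — 3 statements merged into one kernel-verified Lean document; each statement's English description precedes it below -/
import Mathlib

section
/- Let A be an n×n generalized Cartan matrix whose Dynkin diagram graph is acyclic (contains no cycle). Then A is symmetrizable. -/
/-- An integer matrix is a generalized Cartan matrix (GCM). -/
def IsGCM {ι : Type} (A : Matrix ι ι ℤ) : Prop :=
  (∀ i, A i i = 2) ∧ (∀ i j, i ≠ j → A i j ≤ 0) ∧ (∀ i j, A i j = 0 → A j i = 0)

/-- A GCM is symmetrizable if there are nonzero rationals `d i` with
`d i * A i j = d j * A j i` for all `i, j`. -/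
def IsSymmetrizable {ι : Type} (A : Matrix ι ι ℤ) : Prop :=
  ∃ d : ι → ℚ, (∀ i, d i ≠ 0) ∧ ∀ i j, d i * (A i j : ℚ) = d j * (A j i : ℚ)

/-- The Dynkin diagram graph of a GCM: `i` adjacent to `j` iff `i ≠ j` and `A i j ≠ 0`.
(For a GCM, `A i j ≠ 0 ↔ A j i ≠ 0`, so adjacency is stated symmetrically.) -/
def dynkinGraph {ι : Type} (A : Matrix ι ι ℤ) : SimpleGraph ι where
  Adj i j := i ≠ j ∧ A i j ≠ 0 ∧ A j i ≠ 0
  symm := by constructor; intro i j h; exact ⟨h.1.symm, h.2.2, h.2.1⟩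
  loopless := by constructor; intro i h; exact h.1 rfl

/-!
Weight each dart `u → v` of the Dynkin diagram by `A u v / A v u`. A symmetrizing family must
satisfy `d v = d u * A u v / A v u` along every edge, so `d v` is `d r` times the product of the
weights along any walk from `r` to `v`. In a forest there is exactly one path from a chosen vertex `r` of each
connected component to `v`, so taking `d r = 1` and `d v` the product along that path is
well defined, and the paths to two adjacent vertices differ by the edge joining them.
-/

open SimpleGraph

lemma SimpleGraph.isAcyclic_of_forall_injective_not_cycle {V : Type*} {G : SimpleGraph V}
    (h : ∀ (m : ℕ) (i : Fin (m + 3) → V), Function.Injective i →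
      ¬ ∀ s, G.Adj (i s) (i (s + 1))) :
    G.IsAcyclic := by
  refine isAcyclic_iff_free_cycleGraph.mpr fun n hn ⟨f⟩ => ?_
  obtain ⟨m, rfl⟩ : ∃ m, n = m + 3 := ⟨n - 3, by omega⟩
  exact h m f f.injective fun s => f.toHom.map_adj (cycleGraph_adj.mpr (.inr (by simp)))

section

variable {ι : Type} (A : Matrix ι ι ℤ)

lemma dynkinGraph_adj_of_ne_zero (hzero : ∀ i j, A i j = 0 → A j i = 0) {i j : ι}
    (hij : i ≠ j) (h : A i j ≠ 0) : (dynkinGraph A).Adj i j :=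
  ⟨hij, h, fun h' => h (hzero j i h')⟩

noncomputable def walkRatio {G : SimpleGraph ι} {u v : ι} (p : G.Walk u v) : ℚ :=
  (p.darts.map fun e => (A e.fst e.snd : ℚ) / A e.snd e.fst).prod

@[simp]
lemma walkRatio_copy {G : SimpleGraph ι} {u v u' v' : ι} (p : G.Walk u v) (hu : u = u')
    (hv : v = v') : walkRatio A (p.copy hu hv) = walkRatio A p := by
  subst hu hv
  rfl

lemma walkRatio_concat {G : SimpleGraph ι} {u v w : ι} (p : G.Walk u v) (h : G.Adj v w) :
    walkRatio A (p.concat h) = walkRatio A p * (A v w / A w v) := by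
  simp [walkRatio, Walk.darts_concat]

lemma walkRatio_ne_zero {u v : ι} (p : (dynkinGraph A).Walk u v) : walkRatio A p ≠ 0 := by
  refine List.prod_ne_zero fun h => ?_
  obtain ⟨e, -, he⟩ := List.mem_map.mp h
  obtain ⟨-, h₁, h₂⟩ := e.adj
  exact div_ne_zero (by exact_mod_cast h₁) (by exact_mod_cast h₂) he

lemma walkRatio_mul_eq_of_adj (hG : (dynkinGraph A).IsAcyclic) {r i j : ι}
    {p : (dynkinGraph A).Walk r i} {q : (dynkinGraph A).Walk r j} (hp : p.IsPath)
    (hq : q.IsPath) (hij : (dynkinGraph A).Adj i j) :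
    walkRatio A p * A i j = walkRatio A q * A j i := by
  have hAij : (A i j : ℚ) ≠ 0 := by exact_mod_cast hij.2.1
  have hAji : (A j i : ℚ) ≠ 0 := by exact_mod_cast hij.2.2
  by_cases hj : j ∈ p.support
  · rw [hG.path_concat hq hp hij.symm hj, walkRatio_concat]
    field_simp
  · have hi := hG.mem_support_of_ne_mem_support_of_adj_of_isPath hq hp hij.symm hj
    rw [hG.path_concat hp hq hij hi, walkRatio_concat]
    field_simp

theorem isSymmetrizable_of_isAcyclic (hzero : ∀ i j, A i j = 0 → A j i = 0)
    (hG : (dynkinGraph A).IsAcyclic) : IsSymmetrizable A := by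
  classical
  set G := dynkinGraph A
  let root (v : ι) : ι := (G.connectedComponentMk v).out
  let path (v : ι) : G.Path (root v) v :=
    (ConnectedComponent.exact (Quot.out_eq (G.connectedComponentMk v))).some.toPath
  refine ⟨fun v => walkRatio A (path v).1, fun v => walkRatio_ne_zero A _, fun i j => ?_⟩
  by_cases hij : G.Adj i j
  · have hroot : root j = root i :=
      congrArg Quot.out (ConnectedComponent.sound hij.symm.reachable)
    simpa using walkRatio_mul_eq_of_adj A hG (path i).2
      ((Walk.isPath_copy _ hroot rfl).mpr (path j).2) hij
  · rcases eq_or_ne i j with rfl | hne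
    · rfl
    have h₁ : A i j = 0 := not_not.mp fun h => hij (dynkinGraph_adj_of_ne_zero A hzero hne h)
    simp [h₁, hzero i j h₁]

end

/-- A GCM whose Dynkin diagram graph is acyclic (contains no cycle, i.e. no sequence of
`k = m + 3 ≥ 3` distinct vertices cyclically consecutive-adjacent) is symmetrizable. -/
theorem acyclic_implies_symmetrizable {n : ℕ} (A : Matrix (Fin n) (Fin n) ℤ)
    (hA : IsGCM A)
    (hacyclic : ∀ (m : ℕ) (i : Fin (m + 3) → Fin n), Function.Injective i →
      ¬ (∀ s, (dynkinGraph A).Adj (i s) (i (s + 1)))) :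
    IsSymmetrizable A :=
  isSymmetrizable_of_isAcyclic A hA.2.2 (isAcyclic_of_forall_injective_not_cycle hacyclic)
end

section
/- Let A be a symmetrizable hyperbolic generalized Cartan matrix of rank n ≥ 3. Then A contains a proper indecomposable 2×2 principal submatrix of affine type (equal, up to reordering of its two indices, to [[2,−2],[−2,2]] or [[2,−1],[−4,2]]; equivalently, there exist i ≠ j with A i j · A j i = 4) if and only if n = 3 and A is of noncompact hyperbolic type. -/
/-- The principal submatrix of `A` with rows and columns in `S`. -/
def matSub {ι : Type} (A : Matrix ι ι ℤ) (S : Finset ι) : Matrix S S ℤ :=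
  fun i j => A i.1 j.1

/-- A GCM is of finite type if all of its principal minors are positive. -/
def IsFiniteType {ι : Type} [Fintype ι] [DecidableEq ι] (A : Matrix ι ι ℤ) : Prop :=
  ∀ S : Finset ι, 0 < (matSub A S).det

/-- An indecomposable GCM is of affine type if its determinant is `0` and all proper
principal minors are positive (i.e. every proper principal submatrix is of finite type). -/
def IsAffineType {ι : Type} [Fintype ι] [DecidableEq ι] (A : Matrix ι ι ℤ) : Prop :=
  (dynkinGraph A).Connected ∧ A.det = 0 ∧
    ∀ S : Finset ι, S ≠ Finset.univ → 0 < (matSub A S).det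

/-- An indecomposable GCM of rank at least 3 is hyperbolic if it is of neither finite nor
affine type, but every proper connected principal submatrix is of finite or affine type. -/
def IsHyperbolic {ι : Type} [Fintype ι] [DecidableEq ι] (A : Matrix ι ι ℤ) : Prop :=
  3 ≤ Fintype.card ι ∧ (dynkinGraph A).Connected ∧
  ¬ IsFiniteType A ∧ ¬ IsAffineType A ∧
  ∀ S : Finset ι, S ≠ Finset.univ →
    ((dynkinGraph A).induce (S : Set ι)).Connected →
    (IsFiniteType (matSub A S) ∨ IsAffineType (matSub A S))

/-- A hyperbolic GCM is of compact hyperbolic type if every proper connected principal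
submatrix is of finite type. -/
def IsCompactHyperbolic {ι : Type} [Fintype ι] [DecidableEq ι] (A : Matrix ι ι ℤ) : Prop :=
  IsHyperbolic A ∧ ∀ S : Finset ι, S ≠ Finset.univ →
    ((dynkinGraph A).induce (S : Set ι)).Connected → IsFiniteType (matSub A S)

/-!
If `i ≠ j` and `A i j * A j i = 4`, the principal minor on `{i, j}` is `2 * 2 - 4 = 0`, so no
principal submatrix containing `i` and `j` is of finite type, and none containing a third index
is of affine type. In rank at least `4`, connectedness of the Dynkin diagram yields a third index
`k` adjacent to `i` or `j`, and `{i, j, k}` is a proper connected subdiagram of neither type,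
contradicting hyperbolicity; the subdiagram `{i, j}` itself is not of finite type, so `A` is
noncompact. Conversely, in rank `3` a proper connected subdiagram of affine type has at most two
vertices, and a GCM with at most two indices has vanishing determinant only if it is
`2 × 2` with `A i j * A j i = 4`.
-/

namespace Matrix

theorem det_eq_of_card_eq_two {ι R : Type*} [Fintype ι] [DecidableEq ι] [CommRing R]
    (M : Matrix ι ι R) (hcard : Fintype.card ι = 2) {i j : ι} (hij : i ≠ j) :
    M.det = M i i * M j j - M i j * M j i := by
  have hinj : Function.Injective ![i, j] := by
    intro a b h
    fin_cases a <;> fin_cases b <;> simp_all [eq_comm]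
  let e : Fin 2 ≃ ι := Equiv.ofBijective _
    ((Fintype.bijective_iff_injective_and_card _).2 ⟨hinj, by simp [hcard]⟩)
  rw [← det_submatrix_equiv_self e, det_fin_two]
  simp [e]

end Matrix

namespace SimpleGraph

variable {V : Type*} {G : SimpleGraph V}

theorem Preconnected.exists_adj_of_mem_of_notMem (h : G.Preconnected) {S : Set V} {u v : V}
    (hu : u ∈ S) (hv : v ∉ S) : ∃ a ∈ S, ∃ b ∉ S, G.Adj a b := by
  obtain ⟨p⟩ := h u v
  obtain ⟨d, -, hd, hd'⟩ := p.exists_boundary_dart S hu hv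
  exact ⟨d.fst, hd, d.snd, hd', d.adj⟩

theorem induce_insert_connected_of_adj {s : Set V} {a k : V} (hs : (G.induce s).Preconnected)
    (ha : a ∈ s) (hak : G.Adj a k) : (G.induce (insert k s)).Connected := by
  have hunion : s ∪ {a, k} = insert k s := by
    ext x
    simp only [Set.mem_union, Set.mem_insert_iff, Set.mem_singleton_iff]
    constructor
    · rintro (hx | rfl | rfl) <;> tauto
    · tauto
  rw [← hunion]
  exact connected_induce_union hs (induce_pair_connected_of_adj hak).preconnected ha
    (Set.mem_insert_of_mem a rfl) hak

end SimpleGraph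

section CartanMatrix

theorem matSub_pair_det {κ : Type} [DecidableEq κ] (M : Matrix κ κ ℤ) {i j : κ}
    (hij : i ≠ j) :
    (matSub M {i, j}).det = M i i * M j j - M i j * M j i := by
  have hi : i ∈ ({i, j} : Finset κ) := by simp
  have hj : j ∈ ({i, j} : Finset κ) := by simp
  exact Matrix.det_eq_of_card_eq_two (matSub M {i, j}) (by simp [hij])
    (i := ⟨i, hi⟩) (j := ⟨j, hj⟩) (by simpa using hij)

theorem matSub_pair_det_eq_zero {κ : Type} [DecidableEq κ] {M : Matrix κ κ ℤ} {i j : κ}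
    (hi : M i i = 2) (hj : M j j = 2) (hij : i ≠ j) (h4 : M i j * M j i = 4) :
    (matSub M {i, j}).det = 0 := by
  rw [matSub_pair_det M hij, hi, hj, h4]
  norm_num

theorem dynkinGraph_adj_of_mul_eq_four {κ : Type} {M : Matrix κ κ ℤ} {i j : κ} (hij : i ≠ j)
    (h4 : M i j * M j i = 4) : (dynkinGraph M).Adj i j :=
  ⟨hij, left_ne_zero_of_mul (by rw [h4]; norm_num), right_ne_zero_of_mul (by rw [h4]; norm_num)⟩

variable {ι : Type} [Fintype ι] [DecidableEq ι]

theorem exists_mul_eq_four_of_det_eq_zero (M : Matrix ι ι ℤ) (hdiag : ∀ i, M i i = 2)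
    (hcard : Fintype.card ι ≤ 2) (hdet : M.det = 0) :
    ∃ i j, i ≠ j ∧ M i j * M j i = 4 := by
  interval_cases h : Fintype.card ι
  · have := Fintype.card_eq_zero_iff.mp h
    simp [Matrix.det_isEmpty] at hdet
  · have ⟨_⟩ := Fintype.card_eq_one_iff_nonempty_unique.mp h
    simp [Matrix.det_unique, hdiag] at hdet
  · obtain ⟨i, j, hij⟩ := Fintype.exists_pair_of_one_lt_card (by omega : 1 < Fintype.card ι)
    rw [M.det_eq_of_card_eq_two h hij, hdiag, hdiag] at hdet
    exact ⟨i, j, hij, by omega⟩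

variable {M : Matrix ι ι ℤ} {i j : ι}

theorem not_isFiniteType_of_mul_eq_four (hi : M i i = 2) (hj : M j j = 2) (hij : i ≠ j)
    (h4 : M i j * M j i = 4) : ¬ IsFiniteType M := fun hfin =>
  (hfin {i, j}).ne' (matSub_pair_det_eq_zero hi hj hij h4)

theorem not_isAffineType_of_mul_eq_four (hi : M i i = 2) (hj : M j j = 2) (hij : i ≠ j)
    (h4 : M i j * M j i = 4) {k : ι} (hk : k ∉ ({i, j} : Finset ι)) : ¬ IsAffineType M :=
  fun haff => (haff.2.2 {i, j} fun h => hk (h ▸ Finset.mem_univ k)).ne'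
    (matSub_pair_det_eq_zero hi hj hij h4)

theorem not_isCompactHyperbolic_of_mul_eq_four (hdiag : ∀ i, M i i = 2) (hij : i ≠ j)
    (h4 : M i j * M j i = 4) : ¬ IsCompactHyperbolic M := by
  intro hcomp
  have hproper : ({i, j} : Finset ι) ≠ Finset.univ := by
    intro h
    have := hcomp.1.1
    rw [← Finset.card_univ, ← h, Finset.card_pair hij] at this
    omega
  have hconn : ((dynkinGraph M).induce (({i, j} : Finset ι) : Set ι)).Connected := by
    rw [Finset.coe_pair]
    exact SimpleGraph.induce_pair_connected_of_adj (dynkinGraph_adj_of_mul_eq_four hij h4)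
  exact not_isFiniteType_of_mul_eq_four (M := matSub M {i, j}) (i := ⟨i, by simp⟩)
    (j := ⟨j, by simp⟩) (hdiag i) (hdiag j) (by simpa using hij) h4 (hcomp.2 _ hproper hconn)

namespace IsHyperbolic

theorem card_eq_three_of_mul_eq_four (hhyp : IsHyperbolic M) (hdiag : ∀ i, M i i = 2)
    (hij : i ≠ j) (h4 : M i j * M j i = 4) : Fintype.card ι = 3 := by
  by_contra hne
  have hcard : 4 ≤ Fintype.card ι := by have := hhyp.1; omega
  obtain ⟨v, -, hv⟩ := Finset.exists_mem_notMem_of_card_lt_card (s := {i, j})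
    (t := Finset.univ) (by rw [Finset.card_pair hij, Finset.card_univ]; omega)
  obtain ⟨a, ha, k, hk, hak⟩ := hhyp.2.1.preconnected.exists_adj_of_mem_of_notMem
    (S := (({i, j} : Finset ι) : Set ι)) (u := i) (by simp) hv
  have hpair : ((dynkinGraph M).induce (({i, j} : Finset ι) : Set ι)).Preconnected := by
    rw [Finset.coe_pair]
    exact (SimpleGraph.induce_pair_connected_of_adj (dynkinGraph_adj_of_mul_eq_four hij h4)).1
  set T : Finset ι := insert k {i, j}
  have hproper : T ≠ Finset.univ := by
    intro h
    have : T.card ≤ ({i, j} : Finset ι).card + 1 := Finset.card_insert_le _ _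
    rw [h, Finset.card_pair hij, Finset.card_univ] at this
    omega
  have hconn : ((dynkinGraph M).induce (T : Set ι)).Connected := by
    rw [Finset.coe_insert]
    exact SimpleGraph.induce_insert_connected_of_adj hpair ha hak
  let i' : T := ⟨i, by simp [T]⟩
  let j' : T := ⟨j, by simp [T]⟩
  have hij' : i' ≠ j' := by simpa [i', j'] using hij
  rcases hhyp.2.2.2.2 T hproper hconn with hfin | haff
  · exact not_isFiniteType_of_mul_eq_four (M := matSub M T) (i := i') (j := j')
      (hdiag i) (hdiag j) hij' h4 hfin
  · exact not_isAffineType_of_mul_eq_four (M := matSub M T) (i := i') (j := j')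
      (hdiag i) (hdiag j) hij' h4 (k := ⟨k, by simp [T]⟩) (by simpa [i', j'] using hk) haff

theorem exists_mul_eq_four_of_not_isCompactHyperbolic (hhyp : IsHyperbolic M)
    (hdiag : ∀ i, M i i = 2) (hcard : Fintype.card ι = 3) (hnc : ¬ IsCompactHyperbolic M) :
    ∃ i j, i ≠ j ∧ M i j * M j i = 4 := by
  obtain ⟨S, hproper, hconn, hnf⟩ : ∃ S : Finset ι, S ≠ Finset.univ ∧
      ((dynkinGraph M).induce (S : Set ι)).Connected ∧ ¬ IsFiniteType (matSub M S) := by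
    simpa [IsCompactHyperbolic, hhyp] using hnc
  have haff := (hhyp.2.2.2.2 S hproper hconn).resolve_left hnf
  have hS : Fintype.card S ≤ 2 := by
    have := (Finset.card_lt_iff_ne_univ S).mpr hproper
    rw [Fintype.card_coe]
    omega
  obtain ⟨⟨a, _⟩, ⟨b, _⟩, hab, h4⟩ :=
    exists_mul_eq_four_of_det_eq_zero (matSub M S) (fun x => hdiag x) hS haff.2.1
  exact ⟨a, b, fun h => hab (Subtype.ext h), h4⟩

end IsHyperbolic

end CartanMatrix

theorem affine_two_by_two_iff_rank_three_noncompact_general {n : ℕ}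
    (A : Matrix (Fin n) (Fin n) ℤ) (hA : IsGCM A)
    (hhyp : IsHyperbolic A) :
    (∃ i j, i ≠ j ∧ A i j * A j i = 4) ↔ (n = 3 ∧ ¬ IsCompactHyperbolic A) := by
  constructor
  · rintro ⟨i, j, hij, h4⟩
    exact ⟨by simpa using hhyp.card_eq_three_of_mul_eq_four hA.1 hij h4,
      not_isCompactHyperbolic_of_mul_eq_four hA.1 hij h4⟩
  · rintro ⟨rfl, hnc⟩
    exact hhyp.exists_mul_eq_four_of_not_isCompactHyperbolic hA.1 (Fintype.card_fin 3) hnc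

/-- A symmetrizable hyperbolic GCM contains a proper indecomposable `2 × 2` principal
submatrix of affine type (equivalently, `A i j * A j i = 4` for some `i ≠ j`) iff its rank
is `3` and it is of noncompact hyperbolic type. -/
theorem affine_two_by_two_iff_rank_three_noncompact {n : ℕ}
    (A : Matrix (Fin n) (Fin n) ℤ) (hA : IsGCM A) (hsym : IsSymmetrizable A)
    (hhyp : IsHyperbolic A) :
    (∃ i j, i ≠ j ∧ A i j * A j i = 4) ↔ (n = 3 ∧ ¬ IsCompactHyperbolic A) :=
  affine_two_by_two_iff_rank_three_noncompact_general A hA hhyp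
end

section
/- Let A be a symmetrizable indecomposable hyperbolic generalized Cartan matrix of rank n ≥ 4. Then every proper 2×2 principal submatrix A|_{i,j} (i ≠ j) is of finite type; equivalently, A i j · A j i ≤ 3 for all i ≠ j. -/
/-! If `i` and `j` are joined in the Dynkin diagram, connectedness and `n ≥ 4` give a vertex `k`
outside `{i, j}` joined to one of them. The subdiagram on `{i, j, k}` is proper and connected, hence
of finite or affine type, so its proper principal minor `4 - A i j * A j i` on `{i, j}` is
positive. -/

section Minors

variable {ι : Type} [DecidableEq ι] (A : Matrix ι ι ℤ)

lemma det_matSub_matSub (T : Finset ι) (S : Finset T) :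
    (matSub (matSub A T) S).det = (matSub A (S.map (Function.Embedding.subtype _))).det := by
  rw [← Matrix.det_submatrix_equiv_self (S.equivMap (Function.Embedding.subtype _))]
  rfl

lemma det_matSub_empty : (matSub A ∅).det = 1 := by
  have : IsEmpty (∅ : Finset ι) := Finset.isEmpty_coe_sort.mpr rfl
  exact Matrix.det_isEmpty

lemma det_matSub_singleton (a : ι) : (matSub A {a}).det = A a a :=
  Matrix.det_unique _

lemma det_matSub_pair {a b : ι} (hab : a ≠ b) :
    (matSub A {a, b}).det = A a a * A b b - A a b * A b a := by
  let e : Fin 2 ≃ ({a, b} : Finset ι) := Equiv.ofBijective ![⟨a, by simp⟩, ⟨b, by simp⟩] <| by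
    rw [Fintype.bijective_iff_injective_and_card]
    refine ⟨fun x y hxy => ?_, by simp [Finset.card_pair hab]⟩
    fin_cases x <;> fin_cases y <;> simp_all [Subtype.ext_iff, eq_comm]
  rw [← Matrix.det_submatrix_equiv_self e, Matrix.det_fin_two]
  rfl

lemma isFiniteType_matSub_of_forall_subset {T : Finset ι}
    (h : ∀ S ⊆ T, 0 < (matSub A S).det) : IsFiniteType (matSub A T) := fun S => by
  rw [det_matSub_matSub]
  exact h _ fun x hx => by
    obtain ⟨y, -, rfl⟩ := Finset.mem_map.mp hx
    exact y.2

lemma det_matSub_pos_of_ssubset {T S : Finset ι} (hST : S ⊂ T)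
    (hT : IsFiniteType (matSub A T) ∨ IsAffineType (matSub A T)) : 0 < (matSub A S).det := by
  have hS : (S.subtype (· ∈ T)).map (Function.Embedding.subtype _) = S :=
    Finset.subtype_map_of_mem fun _ hx => hST.subset hx
  have hne : S.subtype (· ∈ T) ≠ Finset.univ := by
    intro h
    apply hST.ne
    rw [← hS, h]
    ext x
    simp
  rw [← hS, ← det_matSub_matSub]
  exact hT.elim (· _) (·.2.2 _ hne)

lemma isFiniteType_matSub_pair {i j : ι} (hij : i ≠ j) (hi : 0 < A i i) (hj : 0 < A j j)
    (h : A i j * A j i < A i i * A j j) : IsFiniteType (matSub A {i, j}) := by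
  refine isFiniteType_matSub_of_forall_subset A fun S hS => ?_
  obtain (rfl | rfl) | rfl | rfl : (S = ∅ ∨ S = {j}) ∨ {i} = S ∨ {i, j} = S := by
    simpa [Finset.powerset_insert] using Finset.mem_powerset.mpr hS
  · rw [det_matSub_empty]
    exact one_pos
  · rwa [det_matSub_singleton]
  · rwa [det_matSub_singleton]
  · rw [det_matSub_pair A hij]
    linarith

end Minors

lemma SimpleGraph.Connected.exists_adj_of_mem_of_notMem {V : Type*} {G : SimpleGraph V}
    (hG : G.Connected) {s : Set V} {u v : V} (hu : u ∈ s) (hv : v ∉ s) :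
    ∃ x ∈ s, ∃ y ∉ s, G.Adj x y := by
  obtain ⟨p⟩ := hG u v
  obtain ⟨d, -, hd₁, hd₂⟩ := p.exists_boundary_dart s hu hv
  exact ⟨_, hd₁, _, hd₂, d.adj⟩

lemma SimpleGraph.connected_induce_insert_of_adj {V : Type*} {G : SimpleGraph V} {s : Set V}
    {x k : V} (hs : (G.induce s).Preconnected) (hx : x ∈ s) (hkx : G.Adj k x) :
    (G.induce (insert k s)).Connected := by
  rw [Set.insert_eq]
  exact SimpleGraph.connected_induce_union .of_subsingleton hs rfl hx hkx

lemma IsHyperbolic.det_matSub_pair_pos {ι : Type} [Fintype ι] [DecidableEq ι]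
    {A : Matrix ι ι ℤ} (hA : IsHyperbolic A) (hcard : 4 ≤ Fintype.card ι) {i j : ι}
    (hij : (dynkinGraph A).Adj i j) : 0 < (matSub A {i, j}).det := by
  obtain ⟨v, -, hv⟩ := Finset.exists_mem_notMem_of_card_lt_card (s := {i, j}) (t := .univ)
    (Finset.card_le_two.trans_lt (by rw [Finset.card_univ]; omega))
  obtain ⟨x, hx, k, hk, hxk⟩ := hA.2.1.exists_adj_of_mem_of_notMem (u := i)
    (s := (({i, j} : Finset ι) : Set ι)) (by simp) (Finset.mem_coe.not.mpr hv)
  have hT : insert k {i, j} ≠ (Finset.univ : Finset ι) := fun h => by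
    have := (Finset.card_insert_le k {i, j}).trans (Nat.succ_le_succ Finset.card_le_two)
    rw [h, Finset.card_univ] at this
    omega
  have hconn : ((dynkinGraph A).induce ((insert k {i, j} : Finset ι) : Set ι)).Connected := by
    rw [Finset.coe_insert]
    refine SimpleGraph.connected_induce_insert_of_adj ?_ hx hxk.symm
    rw [Finset.coe_pair]
    exact (SimpleGraph.induce_pair_connected_of_adj hij).preconnected
  exact det_matSub_pos_of_ssubset A (Finset.ssubset_insert (Finset.mem_coe.not.mp hk))
    (hA.2.2.2.2 _ hT hconn)

theorem rank_ge_four_two_by_two_finite_general {n : ℕ} (hn : 4 ≤ n)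
    (A : Matrix (Fin n) (Fin n) ℤ) (hA : IsGCM A)
    (hhyp : IsHyperbolic A) :
    ∀ i j : Fin n, i ≠ j →
      IsFiniteType (matSub A {i, j}) ∧ A i j * A j i ≤ 3 := by
  intro i j hij
  have hii : A i i = 2 := hA.1 i
  have hjj : A j j = 2 := hA.1 j
  have hprod : A i j * A j i ≤ 3 := by
    by_cases hadj : (dynkinGraph A).Adj i j
    · have := hhyp.det_matSub_pair_pos (by simpa using hn) hadj
      rw [det_matSub_pair A hij, hii, hjj] at this
      omega
    · obtain h | h : A i j = 0 ∨ A j i = 0 := by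
        simp only [dynkinGraph, ne_eq, not_and, not_not] at hadj
        tauto
      all_goals simp [h]
  exact ⟨isFiniteType_matSub_pair A hij (by omega) (by omega) (by rw [hii, hjj]; omega), hprod⟩

/-- In a symmetrizable indecomposable hyperbolic GCM of rank `n ≥ 4`, every proper `2 × 2`
principal submatrix is of finite type; equivalently, `A i j * A j i ≤ 3` for `i ≠ j`. -/
theorem rank_ge_four_two_by_two_finite {n : ℕ} (hn : 4 ≤ n)
    (A : Matrix (Fin n) (Fin n) ℤ) (hA : IsGCM A) (hsym : IsSymmetrizable A)
    (hhyp : IsHyperbolic A) :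
    ∀ i j : Fin n, i ≠ j →
      IsFiniteType (matSub A {i, j}) ∧ A i j * A j i ≤ 3 :=
  rank_ge_four_two_by_two_finite_general hn A hA hhyp
end
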